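/- Let φ₀ be the density of N(μ₀, Σ₀) on ℝ^d (Σ₀ positive definite), Q orthogonal, v ∈ ℝ^d, and φ₁(x) = φ₀(Qx + v). Define SNR(φ₀→φ₁) = (E_{φ₀}[ℓ(X)] − E_{φ₁}[ℓ(X)])² / (Var_{φ₀}[ℓ(X)] + Var_{φ₁}[ℓ(X)]) where ℓ = log φ₀. Then SNR(φ₀→φ₁) ≤ 2·sKL(φ₀, φ₁)² / d. -/

import Mathlib

open MeasureTheory ProbabilityTheory Matrix Real

/-- Density of the multivariate Gaussian `N(μ, S)` on `ℝ^d`. -/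
noncomputable def gaussianDensity {d : ℕ} (μ : Fin d → ℝ) (S : Matrix (Fin d) (Fin d) ℝ)
    (x : Fin d → ℝ) : ℝ :=
  ((2 * Real.pi) ^ d * S.det) ^ (-(1 : ℝ) / 2) *
    Real.exp (-(1 / 2) * ((x - μ) ⬝ᵥ S⁻¹ *ᵥ (x - μ)))

/-!
A rigid motion preserves Lebesgue measure, so `φ₁` has the same entropy as `φ₀`; hence the
numerator `E_{φ₀} ℓ - E_{φ₁} ℓ` is exactly `KL(φ₁‖φ₀)`, which is at most `sKL(φ₀, φ₁)` because
both relative entropies are nonnegative (Gibbs). In the denominator `ℓ = c - q / 2` with `q` the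
Mahalanobis form of `φ₀`. Writing `S⁻¹ = Bᵀ B`, the substitution `y = B (x - μ₀)` turns `q` into
`|y|²` under the standard Gaussian, whose moments `d` and `d² + 2d` follow from `E y² = 1` and
`E y⁴ = 3` in one dimension; so `Var_{φ₀} ℓ = (d² + 2d - d²) / 4 = d / 2`, while `Var_{φ₁} ℓ ≥ 0`.
-/

section AffineChangeOfVariables

variable {ι : Type*} [Fintype ι] [DecidableEq ι] {M : Matrix ι ι ℝ}

lemma measurableEmbedding_mulVec_add (hM : M.det ≠ 0) (w : ι → ℝ) :
    MeasurableEmbedding fun x => M *ᵥ x + w :=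
  (MeasurableEquiv.addRight w).measurableEmbedding.comp
    ((Matrix.toLinearEquiv' M (M.invertibleOfIsUnitDet hM.isUnit)).toContinuousLinearEquiv
      |>.toHomeomorph.measurableEmbedding)

lemma map_mulVec_add_volume (hM : M.det ≠ 0) (w : ι → ℝ) :
    Measure.map (fun x => M *ᵥ x + w) volume = ENNReal.ofReal |M.det⁻¹| • volume := by
  have hcomp : (fun x => M *ᵥ x + w) = (· + w) ∘ Matrix.toLin' M := by
    ext x; simp [Matrix.toLin'_apply]
  rw [hcomp, ← Measure.map_map (measurable_add_const w)
      (Matrix.toLin' M).continuous_of_finiteDimensional.measurable,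
    Real.map_matrix_volume_pi_eq_smul_volume_pi hM, Measure.map_smul, map_add_right_eq_self]

lemma integral_comp_mulVec_add (hM : M.det ≠ 0) (w : ι → ℝ) (f : (ι → ℝ) → ℝ) :
    ∫ x, f (M *ᵥ x + w) = |M.det|⁻¹ * ∫ y, f y := by
  rw [← (measurableEmbedding_mulVec_add hM w).integral_map, map_mulVec_add_volume hM w,
    integral_smul_measure, ENNReal.toReal_ofReal (abs_nonneg _), abs_inv, smul_eq_mul]

lemma integrable_comp_mulVec_add_iff (hM : M.det ≠ 0) (w : ι → ℝ) (f : (ι → ℝ) → ℝ) :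
    Integrable (fun x => f (M *ᵥ x + w)) ↔ Integrable f := by
  change Integrable (f ∘ fun x => M *ᵥ x + w) ↔ _
  rw [← (measurableEmbedding_mulVec_add hM w).integrable_map_iff, map_mulVec_add_volume hM w,
    integrable_smul_measure (by simpa using hM) ENNReal.ofReal_ne_top]

end AffineChangeOfVariables

section WithDensity

variable {α : Type*} [MeasurableSpace α] {μ : Measure α} {f : α → ℝ}

lemma integral_withDensity_ofReal (hf : Measurable f) (hf₀ : ∀ x, 0 ≤ f x) (g : α → ℝ) :
    ∫ x, g x ∂μ.withDensity (fun x => ENNReal.ofReal (f x)) = ∫ x, g x * f x ∂μ := by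
  rw [integral_withDensity_eq_integral_toReal_smul hf.ennreal_ofReal
    (.of_forall fun _ => ENNReal.ofReal_lt_top)]
  simp only [ENNReal.toReal_ofReal (hf₀ _), smul_eq_mul, mul_comm]

lemma integrable_withDensity_ofReal_iff (hf : Measurable f) (hf₀ : ∀ x, 0 ≤ f x) (g : α → ℝ) :
    Integrable g (μ.withDensity fun x => ENNReal.ofReal (f x))
      ↔ Integrable (fun x => g x * f x) μ := by
  rw [integrable_withDensity_iff_integrable_smul' hf.ennreal_ofReal
    (.of_forall fun _ => ENNReal.ofReal_lt_top)]
  simp only [ENNReal.toReal_ofReal (hf₀ _), smul_eq_mul, mul_comm]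

lemma isProbabilityMeasure_withDensity_ofReal (hf₀ : ∀ x, 0 ≤ f x) (hf : Integrable f μ)
    (h₁ : ∫ x, f x ∂μ = 1) : IsProbabilityMeasure (μ.withDensity fun x => ENNReal.ofReal (f x)) :=
  ⟨by rw [withDensity_apply _ .univ, setLIntegral_univ,
    ← ofReal_integral_eq_lintegral_ofReal hf (.of_forall hf₀), h₁, ENNReal.ofReal_one]⟩

end WithDensity

lemma integral_log_div_mul_nonneg {α : Type*} [MeasurableSpace α] {μ : Measure α}
    {f g : α → ℝ} (hf : ∀ x, 0 < f x) (hg : ∀ x, 0 < g x)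
    (hfi : Integrable f μ) (hgi : Integrable g μ)
    (hfg : Integrable (fun x => log (f x / g x) * f x) μ)
    (hmass : ∫ x, g x ∂μ ≤ ∫ x, f x ∂μ) :
    0 ≤ ∫ x, log (f x / g x) * f x ∂μ := by
  have hpoint (x : α) : f x - g x ≤ log (f x / g x) * f x := by
    have h := mul_le_mul_of_nonneg_right (one_sub_inv_le_log_of_pos (div_pos (hf x) (hg x)))
      (hf x).le
    rwa [inv_div, sub_mul, one_mul, div_mul_cancel₀ _ (hf x).ne'] at h
  have h := integral_mono (hfi.sub hgi) hfg hpoint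
  rw [integral_sub' hfi hgi] at h
  linarith

lemma gaussianPDFReal_zero_one (x : ℝ) :
    gaussianPDFReal 0 1 x = (√(2 * π))⁻¹ * exp (-(1 / 2) * x ^ 2) := by
  simp only [gaussianPDFReal, NNReal.coe_one, mul_one, sub_zero]
  ring_nf

lemma integrable_pow_mul_gaussianPDFReal (n : ℕ) :
    Integrable fun x : ℝ => x ^ n * gaussianPDFReal 0 1 x := by
  have h := integrable_rpow_mul_exp_neg_mul_sq (b := 1 / 2) (by norm_num)
    (s := n) (by linarith [n.cast_nonneg (α := ℝ)])
  simp only [rpow_natCast] at h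
  refine (h.const_mul (√(2 * π))⁻¹).congr (.of_forall fun x => ?_)
  simp only [gaussianPDFReal_zero_one]; ring

lemma integral_even_pow_mul_gaussianPDFReal (n : ℕ) :
    ∫ x : ℝ, x ^ (2 * n) * gaussianPDFReal 0 1 x = 2 ^ n * Gamma (n + 1 / 2) / √π := by
  have half_line := integral_rpow_mul_exp_neg_mul_rpow (p := 2) (q := (2 * n : ℕ)) (b := 1 / 2)
    (by norm_num) (by linarith [(2 * n : ℕ).cast_nonneg (α := ℝ)]) (by norm_num)
  simp only [rpow_natCast, rpow_two] at half_line
  have heven : ∫ x : ℝ, x ^ (2 * n) * exp (-(1 / 2) * x ^ 2)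
      = 2 * ∫ x in Set.Ioi (0 : ℝ), x ^ (2 * n) * exp (-(1 / 2) * x ^ 2) := by
    rw [← integral_comp_abs (f := fun x => x ^ (2 * n) * exp (-(1 / 2) * x ^ 2))]
    simp only [pow_mul, sq_abs]
  have hpow : (1 / 2 : ℝ) ^ (-((2 * n : ℕ) + 1 : ℝ) / 2) = 2 ^ n * √2 := by
    rw [one_div, inv_rpow (by norm_num), ← rpow_neg (by norm_num), sqrt_eq_rpow,
      ← rpow_natCast, ← rpow_add (by norm_num)]
    congr 1; push_cast; ring
  simp_rw [gaussianPDFReal_zero_one]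
  rw [show (fun x : ℝ => x ^ (2 * n) * ((√(2 * π))⁻¹ * exp (-(1 / 2) * x ^ 2)))
      = fun x => (√(2 * π))⁻¹ * (x ^ (2 * n) * exp (-(1 / 2) * x ^ 2)) by ext; ring,
    integral_const_mul, heven, half_line, hpow,
    show ((2 * n : ℕ) + 1 : ℝ) / 2 = n + 1 / 2 by push_cast; ring,
    sqrt_mul (by norm_num)]
  field_simp

lemma integral_sq_mul_gaussianPDFReal : ∫ x : ℝ, x ^ 2 * gaussianPDFReal 0 1 x = 1 := by
  have h := integral_even_pow_mul_gaussianPDFReal 1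
  rw [show (1 : ℕ) + (1 / 2 : ℝ) = 1 / 2 + 1 by norm_num, Gamma_add_one (by norm_num),
    Gamma_one_half_eq] at h
  simpa [(sqrt_pos.2 pi_pos).ne'] using h

lemma integral_pow_four_mul_gaussianPDFReal : ∫ x : ℝ, x ^ 4 * gaussianPDFReal 0 1 x = 3 := by
  have h := integral_even_pow_mul_gaussianPDFReal 2
  rw [show (2 : ℕ) + (1 / 2 : ℝ) = 1 / 2 + 1 + 1 by norm_num, Gamma_add_one (by norm_num),
    Gamma_add_one (by norm_num), Gamma_one_half_eq] at h
  field_simp at h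
  norm_num at h
  linarith

section StandardGaussian
variable {d : ℕ}

lemma gaussianDensity_zero_one (y : Fin d → ℝ) :
    gaussianDensity 0 1 y = ∏ k, gaussianPDFReal 0 1 (y k) := by
  have hconst : ((2 * π) ^ d) ^ (-(1 : ℝ) / 2) = (√(2 * π))⁻¹ ^ d := by
    rw [sqrt_eq_rpow, ← rpow_neg (by positivity), ← rpow_mul_natCast (by positivity),
      ← rpow_natCast_mul (by positivity)]
    ring_nf
  simp only [gaussianDensity, gaussianPDFReal_zero_one, Finset.prod_mul_distrib, det_one, mul_one,
    inv_one, one_mulVec, sub_zero, Finset.prod_const, Finset.card_univ, Fintype.card_fin,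
    ← exp_sum, dotProduct, Finset.mul_sum, hconst, sq]

lemma integrable_prod_mul_gaussianDensity_zero_one (f : Fin d → ℝ → ℝ)
    (hf : ∀ k, Integrable fun x => f k x * gaussianPDFReal 0 1 x) :
    Integrable fun y => (∏ k, f k (y k)) * gaussianDensity 0 1 y :=
  (Integrable.fintype_prod_dep hf).congr <| .of_forall fun y => by
    simp only [gaussianDensity_zero_one, Finset.prod_mul_distrib]

lemma integral_prod_mul_gaussianDensity_zero_one (f : Fin d → ℝ → ℝ) :
    ∫ y, (∏ k, f k (y k)) * gaussianDensity 0 1 y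
      = ∏ k, ∫ x, f k x * gaussianPDFReal 0 1 x := by
  simpa only [gaussianDensity_zero_one, ← Finset.prod_mul_distrib] using
    integral_fintype_prod_volume_eq_prod fun k x => f k x * gaussianPDFReal 0 1 x

lemma integrable_gaussianDensity_zero_one : Integrable (gaussianDensity (0 : Fin d → ℝ) 1) := by
  simpa using integrable_prod_mul_gaussianDensity_zero_one (fun _ _ => 1) fun _ => by
    simpa using integrable_gaussianPDFReal 0 1

lemma integral_gaussianDensity_zero_one : ∫ y : Fin d → ℝ, gaussianDensity 0 1 y = 1 := by
  simpa [integral_gaussianPDFReal_eq_one] using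
    integral_prod_mul_gaussianDensity_zero_one (d := d) fun _ _ => 1

lemma integrable_sq_mul_gaussianDensity_zero_one (i : Fin d) :
    Integrable fun y : Fin d → ℝ => y i ^ 2 * gaussianDensity 0 1 y := by
  have hfactor (p : Prop) [Decidable p] :
      Integrable fun x : ℝ => (if p then x ^ 2 else 1) * gaussianPDFReal 0 1 x := by
    by_cases hp : p <;> simp only [hp, if_true, if_false, one_mul]
    · exact integrable_pow_mul_gaussianPDFReal 2
    · exact integrable_gaussianPDFReal 0 1
  refine (integrable_prod_mul_gaussianDensity_zero_one (fun k x => if k = i then x ^ 2 else 1)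
    fun k => hfactor _).congr (.of_forall fun y => ?_)
  simp only [Finset.prod_ite_eq', Finset.mem_univ, if_true]

lemma integral_sq_mul_gaussianDensity_zero_one (i : Fin d) :
    ∫ y : Fin d → ℝ, y i ^ 2 * gaussianDensity 0 1 y = 1 := by
  have hfactor (p : Prop) [Decidable p] :
      ∫ x : ℝ, (if p then x ^ 2 else 1) * gaussianPDFReal 0 1 x = 1 := by
    by_cases hp : p <;> simp only [hp, if_true, if_false, one_mul]
    · exact integral_sq_mul_gaussianPDFReal
    · exact integral_gaussianPDFReal_eq_one 0 one_ne_zero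
  have hprod := integral_prod_mul_gaussianDensity_zero_one fun k x => if k = i then x ^ 2 else 1
  simpa only [Finset.prod_ite_eq', Finset.mem_univ, if_true, hfactor, Finset.prod_const_one]
    using hprod

lemma integrable_sq_mul_sq_mul_gaussianDensity_zero_one (i j : Fin d) :
    Integrable fun y : Fin d → ℝ => y i ^ 2 * y j ^ 2 * gaussianDensity 0 1 y := by
  have hfactor (p q : Prop) [Decidable p] [Decidable q] : Integrable fun x : ℝ =>
      (if p then x ^ 2 else 1) * (if q then x ^ 2 else 1) * gaussianPDFReal 0 1 x := by
    by_cases hp : p <;> by_cases hq : q <;> simp only [hp, hq, if_true, if_false, one_mul, mul_one]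
    · simpa only [← pow_add] using integrable_pow_mul_gaussianPDFReal (2 + 2)
    iterate 2 exact integrable_pow_mul_gaussianPDFReal 2
    exact integrable_gaussianPDFReal 0 1
  refine (integrable_prod_mul_gaussianDensity_zero_one
    (fun k x => (if k = i then x ^ 2 else 1) * (if k = j then x ^ 2 else 1))
    fun k => hfactor _ _).congr (.of_forall fun y => by
      simp only [Finset.prod_mul_distrib, Finset.prod_ite_eq', Finset.mem_univ, if_true])

lemma integral_sq_mul_sq_mul_gaussianDensity_zero_one (i j : Fin d) :
    ∫ y : Fin d → ℝ, y i ^ 2 * y j ^ 2 * gaussianDensity 0 1 y = if i = j then 3 else 1 := by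
  have hfactor (p q : Prop) [Decidable p] [Decidable q] : ∫ x : ℝ,
      (if p then x ^ 2 else 1) * (if q then x ^ 2 else 1) * gaussianPDFReal 0 1 x
        = if p ∧ q then 3 else 1 := by
    by_cases hp : p <;> by_cases hq : q <;>
      simp only [hp, hq, if_true, if_false, one_mul, mul_one, and_self, and_false, false_and]
    · simpa only [← pow_add] using integral_pow_four_mul_gaussianPDFReal
    iterate 2 exact integral_sq_mul_gaussianPDFReal
    exact integral_gaussianPDFReal_eq_one 0 one_ne_zero
  have hprod := integral_prod_mul_gaussianDensity_zero_one
    fun k x => (if k = i then x ^ 2 else 1) * (if k = j then x ^ 2 else 1)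
  simp only [Finset.prod_mul_distrib, Finset.prod_ite_eq', Finset.mem_univ, if_true,
    hfactor] at hprod
  rw [hprod]
  split_ifs with hij
  · subst hij; simp
  · exact Finset.prod_eq_one fun k _ => if_neg fun hk => hij (hk.1.symm.trans hk.2)

lemma dotProduct_self_eq_sum (y : Fin d → ℝ) : y ⬝ᵥ y = ∑ i, y i ^ 2 := by
  simp only [dotProduct, sq]

lemma integrable_dotProduct_self_mul_gaussianDensity_zero_one :
    Integrable fun y : Fin d → ℝ => (y ⬝ᵥ y) * gaussianDensity 0 1 y := by
  simp only [dotProduct_self_eq_sum, Finset.sum_mul]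
  exact integrable_finsetSum _ fun i _ => integrable_sq_mul_gaussianDensity_zero_one i

lemma integral_dotProduct_self_mul_gaussianDensity_zero_one :
    ∫ y : Fin d → ℝ, (y ⬝ᵥ y) * gaussianDensity 0 1 y = d := by
  simp only [dotProduct_self_eq_sum, Finset.sum_mul]
  rw [integral_finsetSum _ fun i _ => integrable_sq_mul_gaussianDensity_zero_one i]
  simp [integral_sq_mul_gaussianDensity_zero_one]

lemma sq_dotProduct_self_mul_eq_sum (y : Fin d → ℝ) (c : ℝ) :
    (y ⬝ᵥ y) ^ 2 * c = ∑ i, ∑ j, y i ^ 2 * y j ^ 2 * c := by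
  rw [dotProduct_self_eq_sum, pow_two (∑ i, y i ^ 2), Finset.sum_mul_sum, Finset.sum_mul]
  simp only [Finset.sum_mul]

lemma integrable_sq_dotProduct_self_mul_gaussianDensity_zero_one :
    Integrable fun y : Fin d → ℝ => (y ⬝ᵥ y) ^ 2 * gaussianDensity 0 1 y := by
  simp only [sq_dotProduct_self_mul_eq_sum]
  exact integrable_finsetSum _ fun i _ => integrable_finsetSum _ fun j _ =>
    integrable_sq_mul_sq_mul_gaussianDensity_zero_one i j

lemma integral_sq_dotProduct_self_mul_gaussianDensity_zero_one :
    ∫ y : Fin d → ℝ, (y ⬝ᵥ y) ^ 2 * gaussianDensity 0 1 y = d ^ 2 + 2 * d := by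
  simp only [sq_dotProduct_self_mul_eq_sum]
  rw [integral_finsetSum _ fun i _ => integrable_finsetSum _ fun j _ =>
    integrable_sq_mul_sq_mul_gaussianDensity_zero_one i j]
  simp only [integral_finsetSum _ fun j _ => integrable_sq_mul_sq_mul_gaussianDensity_zero_one _ j,
    integral_sq_mul_sq_mul_gaussianDensity_zero_one]
  have hrow (i : Fin d) : ∑ j, (if i = j then (3 : ℝ) else 1) = d + 2 := by
    have h (j : Fin d) : (if i = j then (3 : ℝ) else 1) = 1 + if i = j then 2 else 0 := by
      split_ifs <;> norm_num
    simp [h, Finset.sum_add_distrib]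
  simp only [hrow, Finset.sum_const, Finset.card_univ, Fintype.card_fin, nsmul_eq_mul]
  ring

end StandardGaussian

lemma Matrix.PosDef.exists_inv_eq_transpose_mul_self {n : Type*} [Fintype n] [DecidableEq n]
    {S : Matrix n n ℝ} (hS : S.PosDef) : ∃ B : Matrix n n ℝ, S⁻¹ = Bᵀ * B := by
  open scoped MatrixOrder in
  obtain ⟨B, hB⟩ := CStarAlgebra.nonneg_iff_eq_star_mul_self.mp hS.inv.posSemidef.nonneg
  exact ⟨B, by simpa [star_eq_conjTranspose] using hB⟩

section Whitening

variable {d : ℕ} {S B : Matrix (Fin d) (Fin d) ℝ}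

lemma det_ne_zero_of_inv_eq_transpose_mul_self (hS : S.PosDef) (hB : S⁻¹ = Bᵀ * B) :
    B.det ≠ 0 := by
  have h := hS.inv.det_pos
  rw [hB, det_mul, det_transpose] at h
  exact fun h0 => by simp [h0] at h

lemma mahalanobis_eq_dotProduct_self (hB : S⁻¹ = Bᵀ * B) (μ x : Fin d → ℝ) :
    (x - μ) ⬝ᵥ S⁻¹ *ᵥ (x - μ) = (B *ᵥ (x - μ)) ⬝ᵥ (B *ᵥ (x - μ)) := by
  rw [hB, ← mulVec_mulVec, dotProduct_mulVec, vecMul_transpose]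

lemma gaussianDensity_eq_abs_det_mul (hS : S.PosDef) (hB : S⁻¹ = Bᵀ * B) (μ x : Fin d → ℝ) :
    gaussianDensity μ S x = |B.det| * gaussianDensity 0 1 (B *ᵥ (x - μ)) := by
  have hdetS : S.det = (|B.det| ^ 2)⁻¹ := by
    have hinv : S⁻¹.det = |B.det| ^ 2 := by rw [hB, det_mul, det_transpose, sq_abs, sq]
    rw [← hinv, det_nonsing_inv, Ring.inverse_eq_inv', inv_inv]
  have hconst : ((2 * π) ^ d * S.det) ^ (-(1 : ℝ) / 2)
      = |B.det| * ((2 * π) ^ d * 1) ^ (-(1 : ℝ) / 2) := by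
    rw [mul_one, mul_rpow (by positivity) hS.det_pos.le, hdetS, inv_rpow (by positivity),
      ← rpow_two, ← rpow_mul (abs_nonneg _)]
    norm_num [rpow_neg_one, mul_comm]
  rw [gaussianDensity, gaussianDensity, mahalanobis_eq_dotProduct_self hB, hconst, det_one,
    inv_one, one_mulVec, sub_zero, mul_assoc]

lemma comp_mahalanobis_mul_gaussianDensity_eq (hS : S.PosDef) (hB : S⁻¹ = Bᵀ * B)
    (g : ℝ → ℝ) (μ x : Fin d → ℝ) :
    g ((x - μ) ⬝ᵥ S⁻¹ *ᵥ (x - μ)) * gaussianDensity μ S x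
      = |B.det| * (fun y => g (y ⬝ᵥ y) * gaussianDensity 0 1 y) (B *ᵥ x + -(B *ᵥ μ)) := by
  rw [gaussianDensity_eq_abs_det_mul hS hB, mahalanobis_eq_dotProduct_self hB,
    ← sub_eq_add_neg, ← mulVec_sub]
  ring

variable (hS : S.PosDef) {μ : Fin d → ℝ}
include hS

lemma integral_comp_mahalanobis_mul_gaussianDensity (g : ℝ → ℝ) :
    ∫ x, g ((x - μ) ⬝ᵥ S⁻¹ *ᵥ (x - μ)) * gaussianDensity μ S x
      = ∫ y : Fin d → ℝ, g (y ⬝ᵥ y) * gaussianDensity 0 1 y := by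
  obtain ⟨B, hB⟩ := hS.exists_inv_eq_transpose_mul_self
  have hdet := det_ne_zero_of_inv_eq_transpose_mul_self hS hB
  simp_rw [comp_mahalanobis_mul_gaussianDensity_eq hS hB]
  rw [integral_const_mul,
    integral_comp_mulVec_add hdet _ fun y => g (y ⬝ᵥ y) * gaussianDensity 0 1 y, ← mul_assoc,
    mul_inv_cancel₀ (abs_ne_zero.2 hdet), one_mul]

lemma integrable_comp_mahalanobis_mul_gaussianDensity_iff (g : ℝ → ℝ) :
    Integrable (fun x => g ((x - μ) ⬝ᵥ S⁻¹ *ᵥ (x - μ)) * gaussianDensity μ S x)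
      ↔ Integrable fun y : Fin d → ℝ => g (y ⬝ᵥ y) * gaussianDensity 0 1 y := by
  obtain ⟨B, hB⟩ := hS.exists_inv_eq_transpose_mul_self
  have hdet := det_ne_zero_of_inv_eq_transpose_mul_self hS hB
  simp_rw [comp_mahalanobis_mul_gaussianDensity_eq hS hB]
  rw [integrable_const_mul_iff (abs_ne_zero.2 hdet).isUnit,
    integrable_comp_mulVec_add_iff hdet _ fun y => g (y ⬝ᵥ y) * gaussianDensity 0 1 y]

end Whitening

section Gaussian

variable {d : ℕ} {μ : Fin d → ℝ} {S : Matrix (Fin d) (Fin d) ℝ}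

lemma gaussianDensity_pos (hS : S.PosDef) (x : Fin d → ℝ) : 0 < gaussianDensity μ S x :=
  mul_pos (rpow_pos_of_pos (mul_pos (by positivity) hS.det_pos) _) (exp_pos _)

lemma measurable_gaussianDensity : Measurable (gaussianDensity μ S) := by
  unfold gaussianDensity
  fun_prop

lemma log_gaussianDensity (hS : S.PosDef) (x : Fin d → ℝ) :
    log (gaussianDensity μ S x) = log (((2 * π) ^ d * S.det) ^ (-(1 : ℝ) / 2))
      - 1 / 2 * ((x - μ) ⬝ᵥ S⁻¹ *ᵥ (x - μ)) := by
  rw [gaussianDensity, log_mul (rpow_pos_of_pos (mul_pos (by positivity) hS.det_pos) _).ne'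
    (exp_pos _).ne', log_exp]
  ring

variable (hS : S.PosDef)
include hS

lemma integrable_gaussianDensity : Integrable (gaussianDensity μ S) := by
  simpa using (integrable_comp_mahalanobis_mul_gaussianDensity_iff hS (μ := μ) fun _ => 1).2
    (by simpa using integrable_gaussianDensity_zero_one)

lemma integral_gaussianDensity : ∫ x, gaussianDensity μ S x = 1 := by
  simpa [integral_gaussianDensity_zero_one] using
    integral_comp_mahalanobis_mul_gaussianDensity hS (μ := μ) fun _ => 1

lemma integrable_mahalanobis_mul_gaussianDensity :
    Integrable fun x => (x - μ) ⬝ᵥ S⁻¹ *ᵥ (x - μ) * gaussianDensity μ S x :=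
  (integrable_comp_mahalanobis_mul_gaussianDensity_iff hS id).2
    integrable_dotProduct_self_mul_gaussianDensity_zero_one

lemma integral_mahalanobis_mul_gaussianDensity :
    ∫ x, (x - μ) ⬝ᵥ S⁻¹ *ᵥ (x - μ) * gaussianDensity μ S x = d :=
  (integral_comp_mahalanobis_mul_gaussianDensity hS id).trans
    integral_dotProduct_self_mul_gaussianDensity_zero_one

lemma integrable_sq_mahalanobis_mul_gaussianDensity :
    Integrable fun x => ((x - μ) ⬝ᵥ S⁻¹ *ᵥ (x - μ)) ^ 2 * gaussianDensity μ S x :=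
  (integrable_comp_mahalanobis_mul_gaussianDensity_iff hS (· ^ 2)).2
    integrable_sq_dotProduct_self_mul_gaussianDensity_zero_one

lemma integral_sq_mahalanobis_mul_gaussianDensity :
    ∫ x, ((x - μ) ⬝ᵥ S⁻¹ *ᵥ (x - μ)) ^ 2 * gaussianDensity μ S x = d ^ 2 + 2 * d :=
  (integral_comp_mahalanobis_mul_gaussianDensity hS (· ^ 2)).trans
    integral_sq_dotProduct_self_mul_gaussianDensity_zero_one

lemma integrable_log_gaussianDensity_mul :
    Integrable fun x => log (gaussianDensity μ S x) * gaussianDensity μ S x := by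
  simp_rw [log_gaussianDensity hS, sub_mul, mul_assoc]
  exact ((integrable_gaussianDensity hS).const_mul _).sub
    ((integrable_mahalanobis_mul_gaussianDensity hS).const_mul _)

lemma variance_log_gaussianDensity :
    variance (fun x => log (gaussianDensity μ S x))
      (volume.withDensity fun x => ENNReal.ofReal (gaussianDensity μ S x)) = d / 2 := by
  set q := fun x : Fin d → ℝ => (x - μ) ⬝ᵥ S⁻¹ *ᵥ (x - μ)
  have hmeas : Measurable q := by fun_prop
  have hφ₀ (x : Fin d → ℝ) : 0 ≤ gaussianDensity μ S x := (gaussianDensity_pos hS x).le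
  have := isProbabilityMeasure_withDensity_ofReal hφ₀ (integrable_gaussianDensity hS)
    (integral_gaussianDensity hS)
  have hq : MemLp q 2 (volume.withDensity fun x => ENNReal.ofReal (gaussianDensity μ S x)) := by
    rw [memLp_two_iff_integrable_sq hmeas.aestronglyMeasurable,
      integrable_withDensity_ofReal_iff measurable_gaussianDensity hφ₀]
    exact integrable_sq_mahalanobis_mul_gaussianDensity hS
  simp_rw [log_gaussianDensity hS]
  rw [variance_const_sub (by fun_prop), variance_const_mul, variance_eq_sub hq]
  simp only [Pi.pow_apply, integral_withDensity_ofReal measurable_gaussianDensity hφ₀]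
  rw [integral_sq_mahalanobis_mul_gaussianDensity hS, integral_mahalanobis_mul_gaussianDensity hS]
  ring

end Gaussian

section RigidMotion

variable {ι : Type*} [Fintype ι] [DecidableEq ι] {Q : Matrix ι ι ℝ}

lemma abs_det_eq_one_of_transpose_mul_self (hQ : Qᵀ * Q = 1) : |Q.det| = 1 := by
  have h := congrArg Matrix.det hQ
  rw [det_mul, det_transpose, det_one, ← sq, ← sq_abs] at h
  exact (pow_eq_one_iff_of_nonneg (abs_nonneg _) two_ne_zero).1 h

lemma det_ne_zero_of_transpose_mul_self (hQ : Qᵀ * Q = 1) : Q.det ≠ 0 :=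
  abs_ne_zero.1 ((abs_det_eq_one_of_transpose_mul_self hQ).trans_ne one_ne_zero)

lemma integral_comp_mulVec_add_of_transpose_mul_self (hQ : Qᵀ * Q = 1) (v : ι → ℝ)
    (f : (ι → ℝ) → ℝ) : ∫ x, f (Q *ᵥ x + v) = ∫ x, f x := by
  rw [integral_comp_mulVec_add (det_ne_zero_of_transpose_mul_self hQ),
    abs_det_eq_one_of_transpose_mul_self hQ, inv_one, one_mul]

variable {f : (ι → ℝ) → ℝ} (hQ : Qᵀ * Q = 1) (v : ι → ℝ) (hf : ∀ x, 0 < f x)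
  (hent : Integrable fun x => log (f x) * f x)
  (hcross : Integrable fun x => log (f x) * f (Q *ᵥ x + v))
include hQ hf hent hcross

lemma integrable_log_div_mul_comp_mulVec_add :
    Integrable fun x => log (f (Q *ᵥ x + v) / f x) * f (Q *ᵥ x + v) := by
  have hent' := (integrable_comp_mulVec_add_iff (det_ne_zero_of_transpose_mul_self hQ) v
    fun y => log (f y) * f y).2 hent
  refine (hent'.sub hcross).congr (.of_forall fun x => ?_)
  simp only [Pi.sub_apply, log_div (hf _).ne' (hf x).ne', sub_mul]

lemma integral_log_div_mul_comp_mulVec_add :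
    ∫ x, log (f (Q *ᵥ x + v) / f x) * f (Q *ᵥ x + v)
      = (∫ x, log (f x) * f x) - ∫ x, log (f x) * f (Q *ᵥ x + v) := by
  have hent' := (integrable_comp_mulVec_add_iff (det_ne_zero_of_transpose_mul_self hQ) v
    fun y => log (f y) * f y).2 hent
  simp only [log_div (hf _).ne' (hf _).ne', sub_mul]
  rw [integral_sub hent' hcross,
    integral_comp_mulVec_add_of_transpose_mul_self hQ v fun y => log (f y) * f y]

end RigidMotion

lemma sq_div_half_add_le_two_mul_sq_div {a b V D : ℝ} (ha : 0 ≤ a) (hb : 0 ≤ b) (hV : 0 ≤ V)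
    (hD : 0 < D) : b ^ 2 / (D / 2 + V) ≤ 2 * (a + b) ^ 2 / D :=
  calc b ^ 2 / (D / 2 + V) ≤ (a + b) ^ 2 / (D / 2) :=
        div_le_div₀ (sq_nonneg _) (pow_le_pow_left₀ hb (by linarith) 2) (by positivity)
          (by linarith)
    _ = 2 * (a + b) ^ 2 / D := by ring

theorem gaussian_detectability_loss_general {d : ℕ} (hd : 0 < d)
    (μ₀ : Fin d → ℝ) (S : Matrix (Fin d) (Fin d) ℝ) (hS : S.PosDef)
    (Q : Matrix (Fin d) (Fin d) ℝ) (hQ : Qᵀ * Q = 1) (v : Fin d → ℝ)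
    (φ₀ φ₁ : (Fin d → ℝ) → ℝ)
    (hφ₀ : ∀ x, φ₀ x = gaussianDensity μ₀ S x)
    (hφ₁ : ∀ x, φ₁ x = φ₀ (Q *ᵥ x + v))
    (hI₁ : Integrable (fun x => Real.log (φ₀ x) * φ₁ x) volume)
    (hKL₀₁ : Integrable (fun x => Real.log (φ₀ x / φ₁ x) * φ₀ x) volume) :
    ((∫ x, Real.log (φ₀ x) * φ₀ x) - ∫ x, Real.log (φ₀ x) * φ₁ x) ^ 2 /
        (variance (fun x => Real.log (φ₀ x))
            (volume.withDensity fun x => ENNReal.ofReal (φ₀ x)) +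
         variance (fun x => Real.log (φ₀ x))
            (volume.withDensity fun x => ENNReal.ofReal (φ₁ x)))
      ≤ 2 * ((∫ x, Real.log (φ₀ x / φ₁ x) * φ₀ x) +
              ∫ x, Real.log (φ₁ x / φ₀ x) * φ₁ x) ^ 2 / d := by
  obtain rfl : φ₀ = gaussianDensity μ₀ S := funext hφ₀
  obtain rfl : φ₁ = fun x => gaussianDensity μ₀ S (Q *ᵥ x + v) := funext hφ₁
  have hpos := gaussianDensity_pos (μ := μ₀) hS
  have hent := integrable_log_gaussianDensity_mul (μ := μ₀) hS
  have hint₀ := integrable_gaussianDensity (μ := μ₀) hS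
  have hint₁ := (integrable_comp_mulVec_add_iff (det_ne_zero_of_transpose_mul_self hQ) v _).2 hint₀
  have hmass := integral_comp_mulVec_add_of_transpose_mul_self hQ v (gaussianDensity μ₀ S)
  have hKL₀₁_nonneg := integral_log_div_mul_nonneg hpos (fun _ => hpos _) hint₀ hint₁ hKL₀₁ hmass.le
  have hKL₁₀_nonneg := integral_log_div_mul_nonneg (fun _ => hpos _) hpos hint₁ hint₀
    (integrable_log_div_mul_comp_mulVec_add hQ v hpos hent hI₁) hmass.ge
  rw [← integral_log_div_mul_comp_mulVec_add hQ v hpos hent hI₁, variance_log_gaussianDensity hS]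
  exact sq_div_half_add_le_two_mul_sq_div hKL₀₁_nonneg hKL₁₀_nonneg (variance_nonneg _ _)
    (Nat.cast_pos.2 hd)

/-- Theorem 1 (detectability loss): for a Gaussian pre-change distribution and
a rigid-motion change, the SNR of the change is at most `2·sKL²/d`. -/
theorem gaussian_detectability_loss {d : ℕ} (hd : 0 < d)
    (μ₀ : Fin d → ℝ) (S : Matrix (Fin d) (Fin d) ℝ) (hS : S.PosDef)
    (Q : Matrix (Fin d) (Fin d) ℝ) (hQ : Qᵀ * Q = 1) (v : Fin d → ℝ)
    (φ₀ φ₁ : (Fin d → ℝ) → ℝ)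
    (hφ₀ : ∀ x, φ₀ x = gaussianDensity μ₀ S x)
    (hφ₁ : ∀ x, φ₁ x = φ₀ (Q *ᵥ x + v))
    (hI₀ : Integrable (fun x => Real.log (φ₀ x) * φ₀ x) volume)
    (hI₁ : Integrable (fun x => Real.log (φ₀ x) * φ₁ x) volume)
    (hKL₀₁ : Integrable (fun x => Real.log (φ₀ x / φ₁ x) * φ₀ x) volume)
    (hKL₁₀ : Integrable (fun x => Real.log (φ₁ x / φ₀ x) * φ₁ x) volume) :
    ((∫ x, Real.log (φ₀ x) * φ₀ x) - ∫ x, Real.log (φ₀ x) * φ₁ x) ^ 2 /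
        (variance (fun x => Real.log (φ₀ x))
            (volume.withDensity fun x => ENNReal.ofReal (φ₀ x)) +
         variance (fun x => Real.log (φ₀ x))
            (volume.withDensity fun x => ENNReal.ofReal (φ₁ x)))
      ≤ 2 * ((∫ x, Real.log (φ₀ x / φ₁ x) * φ₀ x) +
              ∫ x, Real.log (φ₁ x / φ₀ x) * φ₁ x) ^ 2 / d :=
  gaussian_detectability_loss_general hd μ₀ S hS Q hQ v φ₀ φ₁ hφ₀ hφ₁ hI₁ hKL₀₁
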